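/- Let μ be a valuation on K[x] and μ̄ a valuation on K̄[x] with res_K(μ̄) = μ. Let (b,γ) ∈ K̄×Λ with v_{b,γ} ≤ μ̄, and set B = B(b,γ). Then the following are equivalent: (a) there exists c ∈ Min_K B such that res_K(v_{b,γ}) = μ_Q, where Q = p_K(c); (b) there exists c ∈ Min_K B such that ε_μ(Q) = γ, where Q = p_K(c). (A ball B satisfying these conditions is called μ-optimal.) -/

import Mathlib

open Polynomial

noncomputable section

variable {K Λ : Type*} [Field K] [AddCommGroup Λ] [LinearOrder Λ] [IsOrderedAddMonoid Λ]

/-- `v` is a `Λ∪{∞}`-valued valuation (written additively) on the algebraic closure of `K`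
with trivial support: `v b = ⊤ ↔ b = 0`. -/
structure IsValOnField (v : AlgebraicClosure K → WithTop Λ) : Prop where
  map_mul : ∀ a b, v (a * b) = v a + v b
  min_le_add : ∀ a b, min (v a) (v b) ≤ v (a + b)
  eq_top_iff : ∀ a, v a = ⊤ ↔ a = 0

/-- A valuation on `K[x]` with trivial support whose restriction to `K` is `v`. -/
structure IsValOnPoly (v : AlgebraicClosure K → WithTop Λ)
    (μ : Polynomial K → WithTop Λ) : Prop where
  map_mul : ∀ f g, μ (f * g) = μ f + μ g
  min_le_add : ∀ f g, min (μ f) (μ g) ≤ μ (f + g)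
  eq_top_iff : ∀ f, μ f = ⊤ ↔ f = 0
  extends_v : ∀ c : K, μ (C c) = v (algebraMap K (AlgebraicClosure K) c)

/-- A valuation on `K̄[x]` with trivial support whose restriction to `K̄` is `v`. -/
structure IsValOnPolyBar (v : AlgebraicClosure K → WithTop Λ)
    (ν : Polynomial (AlgebraicClosure K) → WithTop Λ) : Prop where
  map_mul : ∀ f g, ν (f * g) = ν f + ν g
  min_le_add : ∀ f g, min (ν f) (ν g) ≤ ν (f + g)
  eq_top_iff : ∀ f, ν f = ⊤ ↔ f = 0
  extends_v : ∀ c : AlgebraicClosure K, ν (C c) = v c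

/-- Restriction `res_K(ν)` of a valuation `ν` on `K̄[x]` to `K[x]`. -/
def resK (ν : Polynomial (AlgebraicClosure K) → WithTop Λ) :
    Polynomial K → WithTop Λ :=
  fun f => ν (f.map (algebraMap K (AlgebraicClosure K)))

/-- The monomial valuation `v_{a,δ}` on `K̄[x]`:
`v_{a,δ}(Σ c_k (x−a)^k) = min_k (v(c_k) + kδ)`. -/
def monoVal (v : AlgebraicClosure K → WithTop Λ) (a : AlgebraicClosure K) (δ : Λ) :
    Polynomial (AlgebraicClosure K) → WithTop Λ :=
  fun f => (Finset.range (f.natDegree + 1)).inf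
    fun k => v ((taylor a f).coeff k) + ((k • δ : Λ) : WithTop Λ)

/-- The closed ball `B(a,δ) = {b ∈ K̄ : v(b−a) ≥ δ}`. -/
def cBall (v : AlgebraicClosure K → WithTop Λ) (a : AlgebraicClosure K) (δ : Λ) :
    Set (AlgebraicClosure K) := {b | (δ : WithTop Λ) ≤ v (b - a)}

/-- The open ball `B°(a,δ) = {b ∈ K̄ : v(b−a) > δ}`. -/
def oBall (v : AlgebraicClosure K → WithTop Λ) (a : AlgebraicClosure K) (δ : Λ) :
    Set (AlgebraicClosure K) := {b | (δ : WithTop Λ) < v (b - a)}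

/-- The decomposition group `𝒟 = {σ ∈ Aut(K̄/K) : v ∘ σ = v}`. -/
def decompGroup (v : AlgebraicClosure K → WithTop Λ) :
    Set (AlgebraicClosure K ≃ₐ[K] AlgebraicClosure K) := {σ | ∀ a, v (σ a) = v a}

/-- `deg_K c`, the degree of the minimal polynomial of `c` over `K`. -/
def degK (K : Type*) [Field K] (c : AlgebraicClosure K) : ℕ := (minpoly K c).natDegree

/-- `deg_K S = min {deg_K c : c ∈ S}`. -/
def degKSet (K : Type*) [Field K] (S : Set (AlgebraicClosure K)) : ℕ := sInf (degK K '' S)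

/-- `Min_K S = {c ∈ S : deg_K c = deg_K S}`. -/
def MinK (K : Type*) [Field K] (S : Set (AlgebraicClosure K)) : Set (AlgebraicClosure K) :=
  {c ∈ S | degK K c = degKSet K S}

/-- Pointwise order on valuations on a polynomial ring. -/
def valLE {R : Type*} [Semiring R] (μ η : Polynomial R → WithTop Λ) : Prop := ∀ f, μ f ≤ η f

/-- Strict pointwise order on valuations. -/
def valLT {R : Type*} [Semiring R] (μ η : Polynomial R → WithTop Λ) : Prop := valLE μ η ∧ μ ≠ η

/-- `Λ` is a divisible group. -/
def IsDivisible (Λ : Type*) [AddCommGroup Λ] : Prop :=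
  ∀ (γ : Λ) (n : ℕ), 0 < n → ∃ γ', n • γ' = γ

/-- `IsEpsilon μ f e` says that `e = ε_μ(f) = max {(μ(f) − μ(∂_s f))/s : s ≥ 1, ∂_s f ≠ 0}`,
where `∂_s` is the `s`-th Hasse–Schmidt derivative. It is expressed without division:
`μ f ≤ s•e + μ(∂_s f)` for all admissible `s`, with equality for at least one `s`. -/
def IsEpsilon (μ : Polynomial K → WithTop Λ) (f : Polynomial K) (e : Λ) : Prop :=
  (∀ s : ℕ, 1 ≤ s → hasseDeriv s f ≠ 0 →
      μ f ≤ ((s • e : Λ) : WithTop Λ) + μ (hasseDeriv s f)) ∧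
  (∃ s : ℕ, 1 ≤ s ∧ hasseDeriv s f ≠ 0 ∧
      μ f = ((s • e : Λ) : WithTop Λ) + μ (hasseDeriv s f))

/-- `Q` is an abstract key polynomial for `μ`: `Q` is monic and `ε_μ(f) < ε_μ(Q)` for every
nonconstant `f` of degree smaller than `deg Q`. -/
def IsAbstractKeyPol (μ : Polynomial K → WithTop Λ) (Q : Polynomial K) : Prop :=
  Q.Monic ∧ ∀ f : Polynomial K, 0 < f.natDegree → f.natDegree < Q.natDegree →
    ∀ e eQ : Λ, IsEpsilon μ f e → IsEpsilon μ Q eQ → e < eQ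

/-- The coefficients of the `Q`-expansion `f = Σᵢ fᵢ Qⁱ` (with `deg fᵢ < deg Q`), obtained by
iterated division with remainder by the monic polynomial `Q`. -/
def qExpand (Q : Polynomial K) : Polynomial K → ℕ → Polynomial K
  | f, 0 => f %ₘ Q
  | f, (i + 1) => qExpand Q (f /ₘ Q) i

/-- The truncation `μ_Q` of `μ` by `Q`: on `Q`-expansions `f = Σᵢ fᵢ Qⁱ`,
`μ_Q(f) = minᵢ μ(fᵢ Qⁱ)`. -/
def truncVal (μ : Polynomial K → WithTop Λ) (Q : Polynomial K) :
    Polynomial K → WithTop Λ :=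
  fun f => (Finset.range (f.natDegree + 1)).inf fun i => μ (qExpand Q f i * Q ^ i)

/-!
Fix `c ∈ Min_K B` and put `Q = p_K(c)`. As `c ∈ B`, `v_{b,γ} = v_{c,γ} =: w`. By minimality of
`deg_K c`, every root `d` of a polynomial over `K` of degree `< deg Q` lies outside `B`, and on
`x - d` with `v(c - d) < γ` the valuations `μ̄`, `w` and `f ↦ v(f(c))` all take the value
`v(c - d)`. Splitting over `K̄` gives `μ(f) = w(f) = v(f(c))` whenever `deg f < deg Q`.

Both conditions are then equivalent to `μ(Q) = w(Q)`. For (b): the derivatives `∂ₛQ` have smaller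
degree, and `ε_w(Q) = γ` because `Q(c) = 0`. For (a): evaluate at `Q`, where `μ_Q(Q) = μ(Q)`;
conversely, induct on the degree along `f = (f mod Q) + Q (f div Q)`, a `w`-orthogonal
decomposition since `w(f) ≤ v(f(c)) = w(f mod Q)`.
-/

@[simp] lemma AddValuation.comap_apply {Γ₀ R S : Type*} [LinearOrderedAddCommMonoidWithTop Γ₀]
    [Ring R] [Ring S] (f : S →+* R) (w : AddValuation R Γ₀) (s : S) : w.comap f s = w (f s) :=
  rfl

lemma AddValuation.zero_le_map_natCast {Γ₀ R : Type*} [LinearOrderedAddCommMonoidWithTop Γ₀]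
    [Ring R] (w : AddValuation R Γ₀) (n : ℕ) : 0 ≤ w n := by
  induction n with
  | zero => simp
  | succ n ih =>
    rw [Nat.cast_succ]
    exact w.map_le_add ih w.map_one.ge

lemma map_one_eq_zero_of_map_mul {M : Type*} [MulOneClass M] {F : M → WithTop Λ}
    (hmul : ∀ a b, F (a * b) = F a + F b) (h1 : F 1 ≠ ⊤) : F 1 = 0 := by
  lift F 1 to Λ using h1 with t ht
  have h := hmul 1 1
  rw [one_mul, ← ht, ← WithTop.coe_add, WithTop.coe_eq_coe, left_eq_add] at h
  rw [h, WithTop.coe_zero]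

def addValuationOfEqTopIff {R : Type*} [Ring R] [Nontrivial R] (F : R → WithTop Λ)
    (hmul : ∀ a b, F (a * b) = F a + F b) (hadd : ∀ a b, min (F a) (F b) ≤ F (a + b))
    (htop : ∀ a, F a = ⊤ ↔ a = 0) : AddValuation R (WithTop Λ) :=
  AddValuation.of F ((htop 0).2 rfl)
    (map_one_eq_zero_of_map_mul hmul ((htop 1).not.2 one_ne_zero)) hadd hmul

section ToAddValuation

variable {v : AlgebraicClosure K → WithTop Λ}

def IsValOnField.toAddValuation (hv : IsValOnField v) :
    AddValuation (AlgebraicClosure K) (WithTop Λ) :=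
  addValuationOfEqTopIff v hv.map_mul hv.min_le_add hv.eq_top_iff

def IsValOnPoly.toAddValuation {μ : K[X] → WithTop Λ} (hμ : IsValOnPoly v μ) :
    AddValuation K[X] (WithTop Λ) :=
  addValuationOfEqTopIff μ hμ.map_mul hμ.min_le_add hμ.eq_top_iff

def IsValOnPolyBar.toAddValuation {ν : (AlgebraicClosure K)[X] → WithTop Λ}
    (hν : IsValOnPolyBar v ν) : AddValuation (AlgebraicClosure K)[X] (WithTop Λ) :=
  addValuationOfEqTopIff ν hν.map_mul hν.min_le_add hν.eq_top_iff

lemma IsValOnField.map_zero (hv : IsValOnField v) : v 0 = ⊤ := hv.toAddValuation.map_zero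

lemma IsValOnField.map_one (hv : IsValOnField v) : v 1 = 0 := hv.toAddValuation.map_one

@[simp] lemma IsValOnField.toAddValuation_apply (hv : IsValOnField v) (a : AlgebraicClosure K) :
    hv.toAddValuation a = v a := rfl

@[simp] lemma IsValOnPolyBar.toAddValuation_apply {ν : (AlgebraicClosure K)[X] → WithTop Λ}
    (hν : IsValOnPolyBar v ν) (f : (AlgebraicClosure K)[X]) : hν.toAddValuation f = ν f := rfl

end ToAddValuation

section GaussVal

open Finset.HasAntidiagonal

variable {R : Type*} [CommRing R] (v : AddValuation R (WithTop Λ)) (δ : Λ)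

def gaussVal (p : R[X]) : WithTop Λ :=
  (Finset.range (p.natDegree + 1)).inf fun k => v (p.coeff k) + ((k • δ : Λ) : WithTop Λ)

variable {v δ}

lemma gaussVal_le (p : R[X]) (k : ℕ) :
    gaussVal v δ p ≤ v (p.coeff k) + ((k • δ : Λ) : WithTop Λ) := by
  rcases le_or_gt k p.natDegree with h | h
  · exact Finset.inf_le (Finset.mem_range.2 (Nat.lt_succ_of_le h))
  · simp [coeff_eq_zero_of_natDegree_lt h]

lemma le_gaussVal_iff {p : R[X]} {g : WithTop Λ} :
    g ≤ gaussVal v δ p ↔ ∀ k, g ≤ v (p.coeff k) + ((k • δ : Λ) : WithTop Λ) :=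
  ⟨fun h k => h.trans (gaussVal_le p k), fun h => Finset.le_inf fun k _ => h k⟩

lemma exists_gaussVal_eq (p : R[X]) :
    ∃ k, gaussVal v δ p = v (p.coeff k) + ((k • δ : Λ) : WithTop Λ) := by
  obtain ⟨k, -, hk⟩ := Finset.exists_mem_eq_inf (Finset.range (p.natDegree + 1))
    Finset.nonempty_range_add_one fun k => v (p.coeff k) + ((k • δ : Λ) : WithTop Λ)
  exact ⟨k, hk⟩

lemma gaussVal_C (a : R) : gaussVal v δ (C a) = v a := by
  simp [gaussVal]

lemma min_le_gaussVal_add (p q : R[X]) :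
    min (gaussVal v δ p) (gaussVal v δ q) ≤ gaussVal v δ (p + q) :=
  le_gaussVal_iff.2 fun k => by
    refine (min_le_min (gaussVal_le p k) (gaussVal_le q k)).trans ?_
    rw [coeff_add, min_add_add_right]
    exact add_le_add_left (v.map_add _ _) _

private lemma weighted_coeff_add (p q : R[X]) (a b : ℕ) :
    v (p.coeff a) + ((a • δ : Λ) : WithTop Λ) +
        (v (q.coeff b) + ((b • δ : Λ) : WithTop Λ)) =
      v (p.coeff a * q.coeff b) + (((a + b) • δ : Λ) : WithTop Λ) := by
  rw [v.map_mul, add_nsmul, WithTop.coe_add]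
  abel

lemma gaussVal_add_le_mul (p q : R[X]) :
    gaussVal v δ p + gaussVal v δ q ≤ gaussVal v δ (p * q) :=
  le_gaussVal_iff.2 fun k => by
    obtain ⟨x, hx, hmin⟩ := Finset.exists_min_image (antidiagonal k)
      (fun x => v (p.coeff x.1 * q.coeff x.2)) ⟨(0, k), by simp⟩
    calc gaussVal v δ p + gaussVal v δ q
        ≤ v (p.coeff x.1) + ((x.1 • δ : Λ) : WithTop Λ) +
            (v (q.coeff x.2) + ((x.2 • δ : Λ) : WithTop Λ)) :=
          add_le_add (gaussVal_le p _) (gaussVal_le q _)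
      _ = v (p.coeff x.1 * q.coeff x.2) + ((k • δ : Λ) : WithTop Λ) := by
          rw [weighted_coeff_add, mem_antidiagonal.1 hx]
      _ ≤ v ((p * q).coeff k) + ((k • δ : Λ) : WithTop Λ) := by
          rw [coeff_mul]
          exact add_le_add_left (v.map_le_sum hmin) _

lemma gaussVal_mul (p q : R[X]) :
    gaussVal v δ (p * q) = gaussVal v δ p + gaussVal v δ q := by
  refine le_antisymm ?_ (gaussVal_add_le_mul p q)
  rcases eq_or_ne (gaussVal v δ p) ⊤ with hp | hp
  · simp [hp]
  rcases eq_or_ne (gaussVal v δ q) ⊤ with hq | hq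
  · simp [hq]
  classical
  -- the product term indexed by the first minimizing indices of `p` and `q` dominates
  have hpk := exists_gaussVal_eq (v := v) (δ := δ) p
  have hqk := exists_gaussVal_eq (v := v) (δ := δ) q
  set i := Nat.find hpk
  set j := Nat.find hqk
  have hi_lt : ∀ a < i, gaussVal v δ p < v (p.coeff a) + ((a • δ : Λ) : WithTop Λ) :=
    fun a ha => (gaussVal_le p a).lt_of_ne (Nat.find_min hpk ha)
  have hj_lt : ∀ b < j, gaussVal v δ q < v (q.coeff b) + ((b • δ : Λ) : WithTop Λ) :=
    fun b hb => (gaussVal_le q b).lt_of_ne (Nat.find_min hqk hb)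
  have hsum : gaussVal v δ p + gaussVal v δ q =
      v (p.coeff i * q.coeff j) + (((i + j) • δ : Λ) : WithTop Λ) := by
    rw [Nat.find_spec hpk, Nat.find_spec hqk, weighted_coeff_add]
  have hlt : ∀ x ∈ (antidiagonal (i + j)).erase (i, j),
      v (p.coeff i * q.coeff j) < v (p.coeff x.1 * q.coeff x.2) := by
    intro x hx
    obtain ⟨hne, hx⟩ := Finset.mem_erase.1 hx
    rw [mem_antidiagonal] at hx
    have : gaussVal v δ p + gaussVal v δ q < v (p.coeff x.1) + ((x.1 • δ : Λ) : WithTop Λ) +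
        (v (q.coeff x.2) + ((x.2 • δ : Λ) : WithTop Λ)) := by
      rcases lt_or_ge x.1 i with h | h
      · exact WithTop.add_lt_add_of_lt_of_le hq (hi_lt _ h) (gaussVal_le q _)
      · have : x.2 < j := by
          by_contra!
          exact hne (Prod.ext (by omega) (by omega))
        exact WithTop.add_lt_add_of_le_of_lt hp (gaussVal_le p _) (hj_lt _ this)
    rwa [hsum, weighted_coeff_add, hx, WithTop.add_lt_add_iff_right WithTop.coe_ne_top] at this
  have hcoeff : v ((p * q).coeff (i + j)) = v (p.coeff i * q.coeff j) := by
    have hfin : v (p.coeff i * q.coeff j) ≠ ⊤ := by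
      intro h
      rw [h, WithTop.top_add] at hsum
      exact (WithTop.add_ne_top.2 ⟨hp, hq⟩) hsum
    have hij : (i, j) ∈ antidiagonal (i + j) := mem_antidiagonal.2 rfl
    rw [coeff_mul, ← Finset.add_sum_erase _ _ hij]
    exact v.map_add_eq_of_lt_left (v.map_lt_sum hfin hlt)
  calc gaussVal v δ (p * q) ≤ v ((p * q).coeff (i + j)) + (((i + j) • δ : Λ) : WithTop Λ) :=
        gaussVal_le _ _
    _ = gaussVal v δ p + gaussVal v δ q := by rw [hcoeff, hsum]

variable (v δ) in
def gaussValuation : AddValuation R[X] (WithTop Λ) :=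
  AddValuation.of (gaussVal v δ) (by simp [gaussVal])
    (by simpa using gaussVal_C (v := v) (δ := δ) 1) min_le_gaussVal_add gaussVal_mul

end GaussVal

lemma gaussVal_eq_top_iff {F : Type*} [Field F] {w : AddValuation F (WithTop Λ)} {δ : Λ}
    {p : F[X]} : gaussVal w δ p = ⊤ ↔ p = 0 := by
  refine ⟨fun h => ?_, fun h => by simp [h, gaussVal]⟩
  have hle := gaussVal_le (v := w) (δ := δ) p p.natDegree
  rwa [h, top_le_iff, WithTop.add_eq_top, or_iff_left WithTop.coe_ne_top, w.top_iff,
    coeff_natDegree, leadingCoeff_eq_zero] at hle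

lemma taylor_hasseDeriv_coeff {R : Type*} [CommRing R] (a : R) (h : R[X]) (s k : ℕ) :
    (taylor a (hasseDeriv s h)).coeff k = ((k + s).choose k : R) * (taylor a h).coeff (k + s) := by
  rw [taylor_coeff, taylor_coeff, ← LinearMap.comp_apply, hasseDeriv_comp, LinearMap.smul_apply,
    eval_smul, nsmul_eq_mul]

lemma map_hasseDeriv {R S : Type*} [Semiring R] [Semiring S] (φ : R →+* S) (f : R[X]) (s : ℕ) :
    (hasseDeriv s f).map φ = hasseDeriv s (f.map φ) := by
  ext k
  simp [coeff_map, hasseDeriv_coeff]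

section Roots

variable {L Γ : Type*} [Field L] [LinearOrderedAddCommMonoidWithTop Γ]

lemma AddValuation.map_X_sub_C_eq_of_lt (w : AddValuation L Γ) (ν : AddValuation L[X] Γ)
    (hC : ∀ x, ν (C x) = w x) {c d : L} {γ : Γ} (hX : γ ≤ ν (X - C c))
    (hd : w (c - d) < γ) : ν (X - C d) = w (c - d) := by
  have hsplit : X - C d = C (c - d) + (X - C c) := by rw [C_sub]; ring
  rw [hsplit, ν.map_add_eq_of_lt_left (by rw [hC]; exact hd.trans_le hX), hC]

lemma AddValuation.map_eq_of_forall_mem_roots [IsAlgClosed L] (ν₁ ν₂ : AddValuation L[X] Γ)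
    (hC : ∀ x, ν₁ (C x) = ν₂ (C x)) {F : L[X]}
    (hF : ∀ d ∈ F.roots, ν₁ (X - C d) = ν₂ (X - C d)) : ν₁ F = ν₂ F := by
  have hprod : ∀ s : Multiset L, (∀ d ∈ s, ν₁ (X - C d) = ν₂ (X - C d)) →
      ν₁ (s.map fun d => X - C d).prod = ν₂ (s.map fun d => X - C d).prod := by
    intro s
    induction s using Multiset.induction_on with
    | empty => simp
    | cons d s ih =>
      intro h
      simp only [Multiset.map_cons, Multiset.prod_cons, AddValuation.map_mul]
      rw [h d (Multiset.mem_cons_self d s), ih fun d hd => h d (Multiset.mem_cons_of_mem hd)]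
  rw [← C_leadingCoeff_mul_prod_multiset_X_sub_C (splits_iff_card_roots.1 (IsAlgClosed.splits F)),
    AddValuation.map_mul, AddValuation.map_mul, hC, hprod _ hF]

end Roots

omit [IsOrderedAddMonoid Λ] in
lemma IsEpsilon.iff_eq {μ ν : K[X] → WithTop Λ} {Q : K[X]} {e : Λ} (hν : IsEpsilon ν Q e)
    (hder : ∀ s, 1 ≤ s → hasseDeriv s Q ≠ 0 → μ (hasseDeriv s Q) = ν (hasseDeriv s Q)) :
    IsEpsilon μ Q e ↔ μ Q = ν Q := by
  obtain ⟨hνle, s₁, hs₁, hd₁, heq₁⟩ := hν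
  constructor
  · rintro ⟨hμle, s₀, hs₀, hd₀, heq₀⟩
    refine le_antisymm ?_ ?_
    · rw [heq₁, ← hder s₁ hs₁ hd₁]
      exact hμle s₁ hs₁ hd₁
    · rw [heq₀, hder s₀ hs₀ hd₀]
      exact hνle s₀ hs₀ hd₀
  · intro h
    refine ⟨fun s hs hd => ?_, s₁, hs₁, hd₁, ?_⟩
    · rw [h, hder s hs hd]
      exact hνle s hs hd
    · rw [h, hder s₁ hs₁ hd₁, heq₁]

omit [IsOrderedAddMonoid Λ] in
lemma IsEpsilon.resK_of_map {ν : (AlgebraicClosure K)[X] → WithTop Λ} {Q : K[X]} {e : Λ}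
    (h : IsEpsilon ν (Q.map (algebraMap K (AlgebraicClosure K))) e) : IsEpsilon (resK ν) Q e := by
  have hne : ∀ s, hasseDeriv s Q ≠ 0 ↔
      hasseDeriv s (Q.map (algebraMap K (AlgebraicClosure K))) ≠ 0 := fun s => by
    rw [← map_hasseDeriv, Polynomial.map_ne_zero_iff (algebraMap K _).injective]
  obtain ⟨hle, s₀, hs₀, hd₀, heq₀⟩ := h
  refine ⟨fun s hs hd => ?_, s₀, hs₀, (hne s₀).2 hd₀, ?_⟩
  · simpa only [resK, map_hasseDeriv] using hle s hs ((hne s).1 hd)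
  · simpa only [resK, map_hasseDeriv] using heq₀

section MonoVal

variable {v : AlgebraicClosure K → WithTop Λ} (hv : IsValOnField v) (a : AlgebraicClosure K)
  (δ : Λ)

include hv

lemma monoVal_eq_gaussVal (f : (AlgebraicClosure K)[X]) :
    monoVal v a δ f = gaussVal hv.toAddValuation δ (taylor a f) := by
  simp only [monoVal, gaussVal, natDegree_taylor, IsValOnField.toAddValuation_apply]

def monoValuation : AddValuation (AlgebraicClosure K)[X] (WithTop Λ) :=
  (gaussValuation hv.toAddValuation δ).comap (taylorAlgHom a).toRingHom

@[simp] lemma monoValuation_apply (f : (AlgebraicClosure K)[X]) :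
    monoValuation hv a δ f = monoVal v a δ f :=
  (monoVal_eq_gaussVal hv a δ f).symm

lemma monoVal_C (x : AlgebraicClosure K) : monoVal v a δ (C x) = v x := by
  rw [monoVal_eq_gaussVal hv, taylor_C, gaussVal_C, IsValOnField.toAddValuation_apply]

lemma monoVal_X_sub_C_self : monoVal v a δ (X - C a) = δ := by
  rw [monoVal_eq_gaussVal hv]
  simp [gaussVal, taylor_X, taylor_C, Finset.range_add_one, hv.map_zero, hv.map_one]

lemma monoVal_le_eval (f : (AlgebraicClosure K)[X]) : monoVal v a δ f ≤ v (f.eval a) := by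
  simpa [monoVal_eq_gaussVal hv, taylor_coeff_zero] using
    gaussVal_le (v := hv.toAddValuation) (δ := δ) (taylor a f) 0

lemma monoVal_X_sub_C_of_lt {d : AlgebraicClosure K} (hd : v (a - d) < δ) :
    monoVal v a δ (X - C d) = v (a - d) := by
  simpa using hv.toAddValuation.map_X_sub_C_eq_of_lt (monoValuation hv a δ)
    (by simp [monoVal_C hv]) (by simp [monoVal_X_sub_C_self hv]) hd

lemma monoVal_le_of_le (ν : AddValuation (AlgebraicClosure K)[X] (WithTop Λ))
    (hC : ∀ x, v x ≤ ν (C x)) (hX : (δ : WithTop Λ) ≤ ν (X - C a))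
    (f : (AlgebraicClosure K)[X]) : monoVal v a δ f ≤ ν f := by
  conv_rhs => rw [← sum_taylor_eq f a]
  refine ν.map_le_sum fun i _ => ?_
  rw [ν.map_mul, ν.map_pow, monoVal_eq_gaussVal hv]
  refine (gaussVal_le _ i).trans (add_le_add (hC _) ?_)
  rw [WithTop.coe_nsmul]
  exact nsmul_le_nsmul_right hX i

lemma le_monoVal_X_sub_C {b : AlgebraicClosure K} (ha : a ∈ cBall v b δ) :
    (δ : WithTop Λ) ≤ monoVal v a δ (X - C b) := by
  have hsplit : X - C b = (X - C a) + C (a - b) := by rw [C_sub]; ring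
  rw [hsplit, ← monoValuation_apply hv]
  refine (monoValuation hv a δ).map_le_add ?_ ?_
  · rw [monoValuation_apply, monoVal_X_sub_C_self hv]
  · rwa [monoValuation_apply, monoVal_C hv]

lemma monoVal_eq_of_mem_cBall {b : AlgebraicClosure K} (hb : b ∈ cBall v a δ) :
    monoVal v a δ = monoVal v b δ := by
  have ha : a ∈ cBall v b δ := by
    rwa [cBall, Set.mem_ofPred_eq, ← hv.toAddValuation_apply, AddValuation.map_sub_swap]
  funext f
  refine le_antisymm ?_ ?_
  · simpa using monoVal_le_of_le hv a δ (monoValuation hv b δ) (by simp [monoVal_C hv])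
      (by simpa using le_monoVal_X_sub_C hv b δ hb) f
  · simpa using monoVal_le_of_le hv b δ (monoValuation hv a δ) (by simp [monoVal_C hv])
      (by simpa using le_monoVal_X_sub_C hv a δ ha) f

lemma monoVal_eq_top_iff {f : (AlgebraicClosure K)[X]} : monoVal v a δ f = ⊤ ↔ f = 0 := by
  rw [monoVal_eq_gaussVal hv, gaussVal_eq_top_iff, taylor_eq_zero]

lemma monoVal_le_nsmul_add_hasseDeriv (h : (AlgebraicClosure K)[X]) (s : ℕ) :
    monoVal v a δ h ≤ ((s • δ : Λ) : WithTop Λ) + monoVal v a δ (hasseDeriv s h) := by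
  set w := hv.toAddValuation
  obtain ⟨k, hk⟩ := exists_gaussVal_eq (v := w) (δ := δ) (taylor a (hasseDeriv s h))
  rw [monoVal_eq_gaussVal hv a δ (hasseDeriv s h), hk, taylor_hasseDeriv_coeff, w.map_mul]
  calc monoVal v a δ h
      ≤ w ((taylor a h).coeff (k + s)) + (((k + s) • δ : Λ) : WithTop Λ) := by
        rw [monoVal_eq_gaussVal hv]
        exact gaussVal_le _ _
    _ = ((s • δ : Λ) : WithTop Λ) +
          (0 + w ((taylor a h).coeff (k + s)) + ((k • δ : Λ) : WithTop Λ)) := by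
        rw [zero_add, add_nsmul, WithTop.coe_add]
        abel
    _ ≤ _ := by grw [← w.zero_le_map_natCast]

lemma isEpsilon_monoVal {h : (AlgebraicClosure K)[X]} (h0 : h ≠ 0) (hroot : h.eval a = 0) :
    IsEpsilon (monoVal v a δ) h δ := by
  refine ⟨fun s _ _ => monoVal_le_nsmul_add_hasseDeriv hv a δ h s, ?_⟩
  obtain ⟨k, hk⟩ := exists_gaussVal_eq (v := hv.toAddValuation) (δ := δ) (taylor a h)
  rw [← monoVal_eq_gaussVal, IsValOnField.toAddValuation_apply, taylor_coeff] at hk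
  have hev : (hasseDeriv k h).eval a ≠ 0 := by
    intro he
    rw [he, hv.map_zero, WithTop.top_add, monoVal_eq_top_iff hv] at hk
    exact h0 hk
  have hk1 : 1 ≤ k := by
    rcases Nat.eq_zero_or_pos k with rfl | hpos
    · exact absurd (by simpa using hroot) hev
    · exact hpos
  refine ⟨k, hk1, fun he => hev (by rw [he, eval_zero]),
    le_antisymm (monoVal_le_nsmul_add_hasseDeriv hv a δ h k) ?_⟩
  rw [hk, add_comm]
  exact add_le_add_left (monoVal_le_eval hv a δ _) _

end MonoVal

section LowDegree

variable {v : AlgebraicClosure K → WithTop Λ} (hv : IsValOnField v) {c : AlgebraicClosure K}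
  {γ : Λ}

include hv

lemma monoVal_eq_eval_of_forall_mem_roots {F : (AlgebraicClosure K)[X]}
    (hF : ∀ d ∈ F.roots, v (c - d) < γ) : monoVal v c γ F = v (F.eval c) := by
  simpa using (monoValuation hv c γ).map_eq_of_forall_mem_roots
    (hv.toAddValuation.comap (evalRingHom c)) (by simp [monoVal_C hv])
    fun d hd => by simpa using monoVal_X_sub_C_of_lt hv c γ (hF d hd)

lemma eq_monoVal_of_forall_mem_roots {μb : (AlgebraicClosure K)[X] → WithTop Λ}
    (hμb : IsValOnPolyBar v μb) (hle : valLE (monoVal v c γ) μb) {F : (AlgebraicClosure K)[X]}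
    (hF : ∀ d ∈ F.roots, v (c - d) < γ) : μb F = monoVal v c γ F := by
  simpa using hμb.toAddValuation.map_eq_of_forall_mem_roots (monoValuation hv c γ)
    (by simp [monoVal_C hv, hμb.extends_v]) fun d hd => by
      rw [hv.toAddValuation.map_X_sub_C_eq_of_lt _ (by simp [hμb.extends_v])
        ((monoVal_X_sub_C_self hv c γ).ge.trans (hle _)) (hF d hd)]
      simpa using (monoVal_X_sub_C_of_lt hv c γ (hF d hd)).symm

variable {b : AlgebraicClosure K} (hc : c ∈ MinK K (cBall v b γ))
include hc

lemma forall_mem_roots_lt_of_natDegree_lt {f : K[X]} (hdeg : f.natDegree < degK K c) :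
    ∀ d ∈ (f.map (algebraMap K (AlgebraicClosure K))).roots, v (c - d) < γ := by
  intro d hd
  by_contra! hγ
  have hf : f ≠ 0 := by
    rintro rfl
    simp at hd
  have hdB : d ∈ cBall v b γ := by
    change (γ : WithTop Λ) ≤ v (d - b)
    rw [show d - b = (d - c) + (c - b) by ring, ← hv.toAddValuation_apply]
    exact hv.toAddValuation.map_le_add (by rwa [AddValuation.map_sub_swap]) hc.1
  have hroot : aeval d f = 0 := by
    rwa [mem_roots_map hf, ← aeval_def] at hd
  have hdeg_d : degK K d ≤ f.natDegree := natDegree_le_of_dvd (minpoly.dvd K d hroot) hf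
  have hmin : degKSet K (cBall v b γ) ≤ degK K d := Nat.sInf_le ⟨d, hdB, rfl⟩
  have := hc.2
  omega

lemma resK_monoVal_eq_aeval_of_natDegree_lt {f : K[X]} (hdeg : f.natDegree < degK K c) :
    resK (monoVal v c γ) f = v (aeval c f) := by
  rw [aeval_def, eval₂_eq_eval_map]
  exact monoVal_eq_eval_of_forall_mem_roots hv (forall_mem_roots_lt_of_natDegree_lt hv hc hdeg)

lemma eq_resK_monoVal_of_natDegree_lt {μ : K[X] → WithTop Λ}
    {μb : (AlgebraicClosure K)[X] → WithTop Λ} (hμb : IsValOnPolyBar v μb)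
    (hres : resK μb = μ) (hle : valLE (monoVal v c γ) μb) {f : K[X]}
    (hdeg : f.natDegree < degK K c) :
    μ f = resK (monoVal v c γ) f :=
  hres ▸ eq_monoVal_of_forall_mem_roots hv hμb hle
    (forall_mem_roots_lt_of_natDegree_lt hv hc hdeg)

end LowDegree

section Truncation

variable (μ : AddValuation K[X] (WithTop Λ)) {Q : K[X]} (hQ : Q.Monic) (hQ1 : 1 ≤ Q.natDegree)

lemma qExpand_zero_left (i : ℕ) : qExpand Q 0 i = 0 := by
  induction i with
  | zero => simp [qExpand]
  | succ i ih => rwa [qExpand, zero_divByMonic]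

include hQ hQ1 in
lemma qExpand_eq_zero_of_natDegree_lt {f : K[X]} {i : ℕ} (hi : f.natDegree < i) :
    qExpand Q f i = 0 := by
  induction i generalizing f with
  | zero => omega
  | succ i ih =>
    rw [qExpand]
    by_cases h0 : f /ₘ Q = 0
    · rw [h0, qExpand_zero_left]
    · have hdeg : Q.natDegree ≤ f.natDegree := by
        rw [divByMonic_eq_zero_iff hQ, not_lt] at h0
        exact natDegree_le_natDegree h0
      exact ih (by rw [natDegree_divByMonic f hQ]; omega)

include hQ hQ1 in
lemma truncVal_eq_inf_range {f : K[X]} {N : ℕ} (hN : f.natDegree ≤ N) :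
    truncVal μ Q f = (Finset.range (N + 1)).inf fun i => μ (qExpand Q f i * Q ^ i) := by
  refine le_antisymm (Finset.le_inf fun i hi => ?_) (Finset.inf_mono (by simpa using hN))
  rcases le_or_gt i f.natDegree with h | h
  · exact Finset.inf_le (Finset.mem_range.2 (Nat.lt_succ_of_le h))
  · simp [qExpand_eq_zero_of_natDegree_lt hQ hQ1 h]

lemma truncVal_zero : truncVal μ Q 0 = ⊤ := by
  simp [truncVal, qExpand]

include hQ hQ1 in
lemma truncVal_eq_min (f : K[X]) :
    truncVal μ Q f = min (μ (f %ₘ Q)) (μ Q + truncVal μ Q (f /ₘ Q)) := by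
  have hdiv : (f /ₘ Q).natDegree ≤ f.natDegree := by
    rw [natDegree_divByMonic f hQ]; omega
  rw [truncVal_eq_inf_range μ hQ hQ1 (Nat.le_succ f.natDegree),
    truncVal_eq_inf_range μ hQ hQ1 hdiv, Finset.range_add_one', Finset.inf_insert,
    Finset.inf_map]
  congr 1
  · simp [qExpand]
  · rw [Finset.apply_inf_eq_inf_comp_of_linearOrder (μ Q + ·) (fun _ _ h => add_le_add_right h _)
      (WithTop.add_top _)]
    refine Finset.inf_congr rfl fun i _ => ?_
    change μ (qExpand Q (f /ₘ Q) i * Q ^ (i + 1)) = μ Q + μ (qExpand Q (f /ₘ Q) i * Q ^ i)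
    rw [← μ.map_mul]
    ring_nf

include hQ hQ1 in
lemma truncVal_of_natDegree_lt {f : K[X]} (hf : f.natDegree < Q.natDegree) :
    truncVal μ Q f = μ f := by
  have hlt : f.degree < Q.degree := degree_lt_degree hf
  rw [truncVal_eq_min μ hQ hQ1, (modByMonic_eq_self_iff hQ).2 hlt,
    (divByMonic_eq_zero_iff hQ).2 hlt, truncVal_zero, WithTop.add_top, min_top_right]

include hQ hQ1 in
lemma truncVal_self : truncVal μ Q Q = μ Q := by
  have hQQ : Q /ₘ Q = 1 := by simpa using mul_divByMonic_cancel_left 1 hQ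
  rw [truncVal_eq_min μ hQ hQ1, modByMonic_self hQ, hQQ,
    truncVal_of_natDegree_lt μ hQ hQ1 (by rwa [natDegree_one])]
  simp

include hQ hQ1 in
theorem truncVal_eq_of_le_map_modByMonic (ν : AddValuation K[X] (WithTop Λ))
    (hlow : ∀ f : K[X], f.natDegree < Q.natDegree → μ f = ν f) (hQν : μ Q = ν Q)
    (horth : ∀ f, ν f ≤ ν (f %ₘ Q)) : truncVal μ Q = ν := by
  funext f
  induction h : f.natDegree using Nat.strong_induction_on generalizing f with
  | _ n ih =>
    rcases lt_or_ge f.natDegree Q.natDegree with hf | hf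
    · rw [truncVal_of_natDegree_lt μ hQ hQ1 hf, hlow f hf]
    have hdiv : (f /ₘ Q).natDegree < n := by
      rw [natDegree_divByMonic f hQ]
      omega
    have hQne : Q ≠ 1 := by
      rintro rfl
      simp at hQ1
    rw [truncVal_eq_min μ hQ hQ1, hlow _ (natDegree_modByMonic_lt f hQ hQne), hQν,
      ih _ hdiv _ rfl, ← ν.map_mul]
    conv_rhs => rw [← modByMonic_add_div f Q]
    rcases le_or_gt (ν (f %ₘ Q)) (ν (Q * (f /ₘ Q))) with hle | hlt
    · rw [min_eq_left hle]
      refine le_antisymm ((le_min le_rfl hle).trans (ν.map_add _ _)) ?_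
      simpa only [modByMonic_add_div f Q] using horth f
    · rw [min_eq_right hlt.le, ν.map_add_eq_of_lt_right hlt]

end Truncation

section OptimalBall

variable {v : AlgebraicClosure K → WithTop Λ} (hv : IsValOnField v)
  {μ : K[X] → WithTop Λ} {μb : (AlgebraicClosure K)[X] → WithTop Λ}
  (hμb : IsValOnPolyBar v μb) (hres : resK μb = μ)
  {b c : AlgebraicClosure K} {γ : Λ} (hle : valLE (monoVal v c γ) μb)
  (hc : c ∈ MinK K (cBall v b γ))

include hv hμb hres hle hc

lemma isEpsilon_minpoly_iff :
    IsEpsilon μ (minpoly K c) γ ↔ μ (minpoly K c) = resK (monoVal v c γ) (minpoly K c) := by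
  have hint : IsIntegral K c := Algebra.IsIntegral.isIntegral c
  refine IsEpsilon.iff_eq (IsEpsilon.resK_of_map (isEpsilon_monoVal hv c γ ?_ ?_)) fun s hs _ =>
    eq_resK_monoVal_of_natDegree_lt hv hc hμb hres hle ?_
  · exact (Polynomial.map_ne_zero_iff (algebraMap K _).injective).2 (minpoly.ne_zero hint)
  · rw [eval_map, ← aeval_def, minpoly.aeval]
  · have := natDegree_hasseDeriv_le (minpoly K c) s
    have := minpoly.natDegree_pos hint
    unfold degK
    omega

lemma truncVal_minpoly_eq_iff (hμ : IsValOnPoly v μ) :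
    truncVal μ (minpoly K c) = resK (monoVal v c γ) ↔
      μ (minpoly K c) = resK (monoVal v c γ) (minpoly K c) := by
  have hint : IsIntegral K c := Algebra.IsIntegral.isIntegral c
  have hQ := minpoly.monic hint
  have hQ1 := minpoly.natDegree_pos hint
  have hν : ⇑((monoValuation hv c γ).comap (mapRingHom (algebraMap K (AlgebraicClosure K)))) =
      resK (monoVal v c γ) := funext fun f => monoValuation_apply hv c γ _
  constructor
  · intro h
    rw [← h]
    exact (truncVal_self hμ.toAddValuation hQ hQ1).symm
  · intro hQν
    rw [← hν]
    refine truncVal_eq_of_le_map_modByMonic hμ.toAddValuation hQ hQ1 _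
      (fun f hf => (eq_resK_monoVal_of_natDegree_lt hv hc hμb hres hle hf).trans
        (congrFun hν f).symm) (hQν.trans (congrFun hν _).symm) fun f => ?_
    rw [hν, resK_monoVal_eq_aeval_of_natDegree_lt hv hc
      (natDegree_modByMonic_lt f hQ (minpoly.ne_one K c)), minpoly.aeval_modByMonic_minpoly,
      aeval_def, eval₂_eq_eval_map]
    exact monoVal_le_eval hv c γ _

end OptimalBall

theorem optimalBallEquiv_general
    (v : AlgebraicClosure K → WithTop Λ) (hv : IsValOnField v)
    (μ : Polynomial K → WithTop Λ) (hμ : IsValOnPoly v μ)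
    (μb : Polynomial (AlgebraicClosure K) → WithTop Λ)
    (hμb : IsValOnPolyBar v μb) (hres : resK μb = μ)
    (b : AlgebraicClosure K) (γ : Λ)
    (hle : valLE (monoVal v b γ) μb) :
    (∃ c ∈ MinK K (cBall v b γ),
        resK (monoVal v b γ) = truncVal μ (minpoly K c)) ↔
      ∃ c ∈ MinK K (cBall v b γ), IsEpsilon μ (minpoly K c) γ := by
  refine exists_congr fun c => and_congr_right fun hc => ?_
  have hbc : monoVal v b γ = monoVal v c γ := monoVal_eq_of_mem_cBall hv b γ hc.1
  rw [hbc] at hle ⊢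
  rw [isEpsilon_minpoly_iff hv hμb hres hle hc, eq_comm]
  exact truncVal_minpoly_eq_iff hv hμb hres hle hc hμ

/-- μ-optimal balls: let `μ̄` extend `μ`, `(b,γ)` with `v_{b,γ} ≤ μ̄`, and
`B = B(b,γ)`. Then: there exists `c ∈ Min_K B` with `res_K(v_{b,γ}) = μ_Q` for `Q = p_K(c)` iff
there exists `c ∈ Min_K B` with `ε_μ(Q) = γ` for `Q = p_K(c)`. -/
theorem optimalBallEquiv
    (v : AlgebraicClosure K → WithTop Λ) (hv : IsValOnField v)
    (hdiv : IsDivisible Λ)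
    (μ : Polynomial K → WithTop Λ) (hμ : IsValOnPoly v μ)
    (μb : Polynomial (AlgebraicClosure K) → WithTop Λ)
    (hμb : IsValOnPolyBar v μb) (hres : resK μb = μ)
    (b : AlgebraicClosure K) (γ : Λ)
    (hle : valLE (monoVal v b γ) μb) :
    (∃ c ∈ MinK K (cBall v b γ),
        resK (monoVal v b γ) = truncVal μ (minpoly K c)) ↔
      ∃ c ∈ MinK K (cBall v b γ), IsEpsilon μ (minpoly K c) γ :=
  optimalBallEquiv_general v hv μ hμ μb hμb hres b γ hle
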